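/- Let g be a compactly supported orientation-preserving C² diffeomorphism of ℝ. Then the centralizer of g in Diff_c²(ℝ) equals the centralizer of g² in Diff_c²(ℝ). -/

import Mathlib

/-- A compactly supported orientation-preserving C² diffeomorphism of ℝ. -/
def IsRDiffc (g : Equiv.Perm ℝ) : Prop :=
  ContDiff ℝ 2 ⇑g ∧ ContDiff ℝ 2 ⇑g.symm ∧ StrictMono ⇑g ∧
  ∃ K : Set ℝ, IsCompact K ∧ ∀ x ∉ K, g x = x

/-!
If `g²` commutes with `h`, then `f = ⁅g⁻¹, h⁻¹⁆ = g⁻¹ (h⁻¹ g h)` satisfies `f g f = g`, hence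
commutes with `g²`, and it fixes every fixed point of `g`: `h` permutes the fixed points of `g²`,
which are those of `g` since `g` is increasing. Let `(a, b)` be a component of the complement of
the fixed points of `g` (bounded because `g` has compact support). Both `f` and `g` preserve it,
and `f g f = g` forbids `f - id` from having a constant sign there, so `f` has a fixed point `c`
in `(a, b)`. Kopell's lemma for `F = g²`, which has no fixed point in `(a, b)`, and `G = f` then
gives `f = id` on `(a, b)`; hence `f = 1`, i.e. `g h = h g`.

Kopell's lemma: say `F` contracts `(a, b)` towards `a`. Bounded distortion of the iterates of
the `C²` map `F` on a fundamental domain `[F p, p]` bounds the derivative of every `C¹` map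
commuting with `F` and fixing `p` (its derivative at `a` is `1`). So the inverse powers of `G`
are uniformly Lipschitz on `[F p, p]`, which forces `G` to fix every point of it; and every
orbit of `F` meets such a domain below `c`.
-/

open Set Filter Topology NNReal
open scoped commutatorElement

theorem Monotone.apply_eq_of_apply_apply_eq {α : Type*} [LinearOrder α] {f : α → α}
    (hf : Monotone f) {x : α} (h : f (f x) = x) : f x = x := by
  rcases le_total (f x) x with hle | hge
  · exact hle.antisymm (h.symm.trans_le (hf hle))
  · exact ((hf hge).trans_eq h).antisymm hge

theorem Equiv.strictMono_symm {α : Type*} [LinearOrder α] {e : α ≃ α} (he : StrictMono e) :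
    StrictMono e.symm := fun x y hxy => he.lt_iff_lt.1 (by simpa using hxy)

theorem mul_mul_eq_of_commute_mul_self {G : Type*} [Group G] {g h : G}
    (hc : Commute (g * g) h) : ⁅g⁻¹, h⁻¹⁆ * g * ⁅g⁻¹, h⁻¹⁆ = g :=
  calc ⁅g⁻¹, h⁻¹⁆ * g * ⁅g⁻¹, h⁻¹⁆ = g⁻¹ * h⁻¹ * (g * g * h) := by group
    _ = g⁻¹ * h⁻¹ * (h * (g * g)) := by rw [hc.eq]
    _ = g := by group

theorem commute_mul_self_of_mul_mul_eq {G : Type*} [Group G] {f g : G} (h : f * g * f = g) :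
    Commute (g * g) f := by
  have hleft : g * f = f⁻¹ * g := by rw [eq_inv_mul_iff_mul_eq, ← mul_assoc, h]
  have hright : g * f⁻¹ = f * g := by rw [mul_inv_eq_iff_eq_mul, h]
  calc g * g * f = g * f⁻¹ * g := by rw [mul_assoc, hleft, ← mul_assoc]
    _ = f * (g * g) := by rw [hright, mul_assoc]

theorem commutatorElement_inv_inv_apply_eq_self {α : Type*} [LinearOrder α]
    {g h : Equiv.Perm α} (hg : Monotone g) (hc : Commute (g * g) h) {x : α} (hx : g x = x) :
    ⁅g⁻¹, h⁻¹⁆ x = x := by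
  have hhx : g (h x) = h x := hg.apply_eq_of_apply_apply_eq <| by
    simpa [hx] using DFunLike.congr_fun hc.eq x
  simp [commutatorElement_def, hhx, Equiv.symm_apply_eq, hx]

def diffeoPlus (n : WithTop ℕ∞) : Subgroup (Equiv.Perm ℝ) where
  carrier := {e | ContDiff ℝ n e ∧ ContDiff ℝ n e.symm ∧ StrictMono e}
  mul_mem' := fun ⟨he, he', hem⟩ ⟨hf, hf', hfm⟩ => ⟨he.comp hf, hf'.comp he', hem.comp hfm⟩
  one_mem' := ⟨contDiff_id, contDiff_id, strictMono_id⟩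
  inv_mem' := fun ⟨he, he', hem⟩ => ⟨he', he, Equiv.strictMono_symm hem⟩

theorem diffeoPlus_antitone : Antitone diffeoPlus :=
  fun _ _ hmn _ ⟨he, he', hem⟩ => ⟨he.of_le hmn, he'.of_le hmn, hem⟩

theorem deriv_pos_of_mem_diffeoPlus {n : WithTop ℕ∞} {e : Equiv.Perm ℝ} (he : e ∈ diffeoPlus n)
    (hn : 1 ≤ n) (x : ℝ) : 0 < deriv e x := by
  obtain ⟨he, he', hem⟩ := he
  have hn0 : n ≠ 0 := (zero_lt_one.trans_le hn).ne'
  have hinv : HasDerivAt (e.symm ∘ e) (deriv e.symm (e x) * deriv e x) x :=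
    ((he'.differentiable hn0) _).hasDerivAt.comp x ((he.differentiable hn0) x).hasDerivAt
  rw [Equiv.symm_comp_self] at hinv
  have hne : deriv e x ≠ 0 :=
    right_ne_zero_of_mul (by rw [hinv.unique (hasDerivAt_id x)]; exact one_ne_zero)
  exact hem.monotone.deriv_nonneg.lt_of_ne' hne

theorem forall_lt_or_forall_gt_of_ne {f : ℝ → ℝ} {a b : ℝ} (hf : ContinuousOn f (Ioo a b))
    (hne : ∀ x ∈ Ioo a b, f x ≠ x) :
    (∀ x ∈ Ioo a b, f x < x) ∨ ∀ x ∈ Ioo a b, x < f x := by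
  by_contra! ⟨⟨x, hx, hxf⟩, ⟨y, hy, hyf⟩⟩
  obtain ⟨z, hz, hfz⟩ :=
    isPreconnected_Ioo.intermediate_value₂ hy hx hf continuousOn_id hyf hxf
  exact hne z hz hfz

theorem IsClosed.exists_Ioo_subset_compl {s : Set ℝ} (hs : IsClosed s)
    (hbdd : Bornology.IsBounded sᶜ) {x : ℝ} (hx : x ∉ s) :
    ∃ a ∈ s, ∃ b ∈ s, x ∈ Ioo a b ∧ Ioo a b ⊆ sᶜ := by
  obtain ⟨lo, hlo⟩ := hbdd.bddBelow
  obtain ⟨hi, hhi⟩ := hbdd.bddAbove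
  have hlo_mem : lo - 1 ∈ s := by_contra fun h => by linarith [hlo h]
  have hhi_mem : hi + 1 ∈ s := by_contra fun h => by linarith [hhi h]
  have hA : IsClosed (s ∩ Iic x) ∧ (s ∩ Iic x).Nonempty ∧ BddAbove (s ∩ Iic x) :=
    ⟨hs.inter isClosed_Iic, ⟨lo - 1, hlo_mem, (by linarith [hlo hx] : lo - 1 ≤ x)⟩,
      ⟨x, fun _ hy => hy.2⟩⟩
  have hB : IsClosed (s ∩ Ici x) ∧ (s ∩ Ici x).Nonempty ∧ BddBelow (s ∩ Ici x) :=
    ⟨hs.inter isClosed_Ici, ⟨hi + 1, hhi_mem, (by linarith [hhi hx] : x ≤ hi + 1)⟩,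
      ⟨x, fun _ hy => hy.2⟩⟩
  obtain ⟨has, hax⟩ := hA.1.csSup_mem hA.2.1 hA.2.2
  obtain ⟨hbs, hbx⟩ := hB.1.csInf_mem hB.2.1 hB.2.2
  refine ⟨_, has, _, hbs, ⟨hax.lt_of_ne fun h => hx (h ▸ has),
    hbx.lt_of_ne' fun h => hx (h ▸ hbs)⟩, fun y hy hys => ?_⟩
  rcases le_total y x with hyx | hxy
  · exact hy.1.not_ge (le_csSup hA.2.2 ⟨hys, hyx⟩)
  · exact hy.2.not_ge (csInf_le hB.2.2 ⟨hys, hxy⟩)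

theorem mapsTo_Ioo_of_lt_self {f : ℝ → ℝ} {a b : ℝ} (hmono : StrictMono f) (hfa : f a = a)
    (hlt : ∀ x ∈ Ioo a b, f x < x) : MapsTo f (Ioo a b) (Ioo a b) := fun y hy =>
  ⟨hfa ▸ hmono hy.1, (hlt y hy).trans hy.2⟩

theorem tendsto_iterate_of_lt_self {f : ℝ → ℝ} {a b : ℝ} (hf : Continuous f)
    (hmono : StrictMono f) (hfa : f a = a) (hlt : ∀ x ∈ Ioo a b, f x < x) {x : ℝ}
    (hx : x ∈ Ioo a b) : Tendsto (fun n => f^[n] x) atTop (𝓝 a) := by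
  have hmaps := mapsTo_Ioo_of_lt_self hmono hfa hlt
  have hbdd : BddBelow (range fun n => f^[n] x) := ⟨a, by
    rintro _ ⟨n, rfl⟩; exact (hmaps.iterate n hx).1.le⟩
  have htend := tendsto_atTop_ciInf (hmono.monotone.antitone_iterate_of_map_le (hlt x hx).le) hbdd
  have hfix := isFixedPt_of_tendsto_iterate htend hf.continuousAt
  have hle : a ≤ ⨅ n, f^[n] x := le_ciInf fun n => (hmaps.iterate n hx).1.le
  obtain heq | hlt' := hle.eq_or_lt
  · rwa [← heq] at htend
  · have hmem : ⨅ n, f^[n] x ∈ Ioo a b := ⟨hlt', (ciInf_le hbdd 0).trans_lt hx.2⟩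
    exact absurd hfix (hlt _ hmem).ne

theorem exists_succ_lt_le {α : Type*} [LinearOrder α] {u : ℕ → α} {y : α} (h0 : y ≤ u 0)
    (h : ∃ n, u n < y) : ∃ k, u (k + 1) < y ∧ y ≤ u k := by
  classical
  have hpos : Nat.find h ≠ 0 := fun h' => (h' ▸ Nat.find_spec h).not_ge h0
  obtain ⟨k, hk⟩ := Nat.exists_eq_succ_of_ne_zero hpos
  refine ⟨k, ?_, not_lt.1 (Nat.find_min h (?_ : k < Nat.find h))⟩
  · simpa [hk] using Nat.find_spec h
  · omega

theorem deriv_iterate {𝕜 : Type*} [NontriviallyNormedField 𝕜] {f : 𝕜 → 𝕜}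
    (hf : Differentiable 𝕜 f) (n : ℕ) (x : 𝕜) :
    deriv f^[n] x = ∏ i ∈ Finset.range n, deriv f (f^[i] x) := by
  suffices HasDerivAt f^[n] (∏ i ∈ Finset.range n, deriv f (f^[i] x)) x from this.deriv
  induction n with
  | zero => simpa using hasDerivAt_id x
  | succ n ih =>
    rw [Function.iterate_succ', Finset.prod_range_succ, mul_comm]
    exact (hf _).hasDerivAt.comp x ih

theorem HasDerivAt.eq_one_of_tendsto_isFixedPt {𝕜 : Type*} [NontriviallyNormedField 𝕜]
    {H : 𝕜 → 𝕜} {H' a : 𝕜} {u : ℕ → 𝕜} (hH : HasDerivAt H H' a)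
    (hu : Tendsto u atTop (𝓝[≠] a)) (hfix : ∀ n, H (u n) = u n) : H' = 1 := by
  have hu' : Tendsto u atTop (𝓝 a) := hu.mono_right nhdsWithin_le_nhds
  have hHa : H a = a := tendsto_nhds_unique ((hH.continuousAt.tendsto.comp hu').congr hfix) hu'
  have hslope := (hasDerivAt_iff_tendsto_slope.1 hH).comp hu
  refine tendsto_nhds_unique hslope (tendsto_const_nhds.congr' ?_)
  filter_upwards [hu.eventually self_mem_nhdsWithin] with n hn
  simp [slope_def_field, hfix, hHa, sub_ne_zero.2 hn]

theorem LipschitzOnWith.le_mul_exp_mul_abs_sub {D : ℝ → ℝ} {s : Set ℝ} {K : ℝ≥0} {m : ℝ}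
    (hD : LipschitzOnWith K D s) (hm : 0 < m) (hDm : ∀ x ∈ s, m ≤ D x) {x y : ℝ}
    (hx : x ∈ s) (hy : y ∈ s) : D x ≤ D y * Real.exp (K / m * |x - y|) := by
  have hlip : D x - D y ≤ K * |x - y| := by
    simpa [Real.dist_eq] using (le_abs_self _).trans (hD.dist_le_mul x hx y hy)
  have hKm : (K : ℝ) * |x - y| ≤ K / m * |x - y| * D y :=
    calc (K : ℝ) * |x - y| = K / m * |x - y| * m := by field_simp
      _ ≤ K / m * |x - y| * D y := mul_le_mul_of_nonneg_left (hDm y hy) (by positivity)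
  calc D x ≤ D y * (K / m * |x - y| + 1) := by linarith
    _ ≤ D y * Real.exp (K / m * |x - y|) :=
      mul_le_mul_of_nonneg_left (Real.add_one_le_exp _) (hm.le.trans (hDm y hy))

theorem iterate_mem_Icc_iterate_succ {f : ℝ → ℝ} (hf : Monotone f) {p x : ℝ}
    (hx : x ∈ Icc (f p) p) (i : ℕ) : f^[i] x ∈ Icc (f^[i + 1] p) (f^[i] p) := by
  simpa only [Function.iterate_succ_apply] using (hf.iterate i).mapsTo_Icc hx

theorem sum_abs_sub_iterate_le {f : ℝ → ℝ} (hf : Monotone f) {p x y : ℝ}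
    (hx : x ∈ Icc (f p) p) (hy : y ∈ Icc (f p) p) (n : ℕ) :
    ∑ i ∈ Finset.range n, |f^[i] x - f^[i] y| ≤ p - f^[n] p := by
  calc ∑ i ∈ Finset.range n, |f^[i] x - f^[i] y|
      ≤ ∑ i ∈ Finset.range n, (f^[i] p - f^[i + 1] p) := by
        refine Finset.sum_le_sum fun i _ => abs_sub_le_iff.2 ⟨?_, ?_⟩ <;>
        · have := iterate_mem_Icc_iterate_succ hf hx i
          have := iterate_mem_Icc_iterate_succ hf hy i
          simp only [mem_Icc] at *
          linarith
    _ = p - f^[n] p := by rw [Finset.sum_range_sub']; rfl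

/-- Bounded distortion on the fundamental domains `[f p, p]`: the only place where `f` has to
be `C²` rather than `C¹`. -/
theorem exists_deriv_iterate_le_mul {f : ℝ → ℝ} {a b : ℝ} (hf : ContDiff ℝ 2 f)
    (hmono : Monotone f) (hfa : f a = a) (hpos : ∀ x ∈ Icc a b, 0 < deriv f x) :
    ∃ S : ℝ≥0, ∀ p ∈ Icc a b, ∀ x ∈ Icc (f p) p, ∀ y ∈ Icc (f p) p, ∀ n,
      deriv f^[n] x ≤ S * deriv f^[n] y := by
  have hdf : ContDiff ℝ 1 (deriv f) := hf.deriv'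
  obtain ⟨K, hK⟩ := hdf.contDiffOn.exists_lipschitzOnWith one_ne_zero (convex_Icc a b)
    isCompact_Icc
  obtain ⟨m, hm, hmD⟩ := isCompact_Icc.exists_forall_le' hdf.continuous.continuousOn hpos
  refine ⟨⟨Real.exp (K / m * (b - a)), (Real.exp_pos _).le⟩, fun p hp x hx y hy n => ?_⟩
  have hmem : ∀ z ∈ Icc (f p) p, ∀ i, f^[i] z ∈ Icc a b := fun z hz i => by
    have hi := iterate_mem_Icc_iterate_succ hmono hz i
    have hlow : a ≤ f^[i + 1] p := by
      simpa [Function.iterate_fixed hfa] using (hmono.iterate (i + 1)) hp.1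
    have hup : f^[i] p ≤ p := hmono.antitone_iterate_of_map_le (hz.1.trans hz.2) (Nat.zero_le i)
    exact ⟨hlow.trans hi.1, hi.2.trans (hup.trans hp.2)⟩
  have hsum := sum_abs_sub_iterate_le hmono hx hy n
  have hlow : a ≤ f^[n] p := by simpa [Function.iterate_fixed hfa] using (hmono.iterate n) hp.1
  rw [deriv_iterate (hf.differentiable two_ne_zero), deriv_iterate (hf.differentiable two_ne_zero)]
  calc ∏ i ∈ Finset.range n, deriv f (f^[i] x)
      ≤ ∏ i ∈ Finset.range n, deriv f (f^[i] y) * Real.exp (K / m * |f^[i] x - f^[i] y|) :=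
        Finset.prod_le_prod (fun i _ => (hpos _ (hmem x hx i)).le) fun i _ =>
          hK.le_mul_exp_mul_abs_sub hm hmD (hmem x hx i) (hmem y hy i)
    _ = (∏ i ∈ Finset.range n, deriv f (f^[i] y)) *
          Real.exp (K / m * ∑ i ∈ Finset.range n, |f^[i] x - f^[i] y|) := by
        rw [Finset.prod_mul_distrib, ← Real.exp_sum, Finset.mul_sum]
    _ ≤ (∏ i ∈ Finset.range n, deriv f (f^[i] y)) * Real.exp (K / m * (b - a)) := by
        gcongr
        · exact Finset.prod_nonneg fun i _ => (hpos _ (hmem y hy i)).le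
        · linarith [hp.2]
    _ = _ := mul_comm _ _

theorem deriv_le_of_commute_iterate {f H : ℝ → ℝ} {a x S : ℝ} (hf : Differentiable ℝ f)
    (hH : ContDiff ℝ 1 H) (hHmono : Monotone H) (hcomm : Function.Commute f H)
    (htend : Tendsto (fun n => f^[n] x) atTop (𝓝 a)) (hHa : deriv H a = 1)
    (hdist : ∀ n, deriv f^[n] x ≤ S * deriv f^[n] (H x)) (hpos : ∀ n, 0 < deriv f^[n] (H x)) :
    deriv H x ≤ S := by
  have hHd : Differentiable ℝ H := hH.differentiable one_ne_zero
  have hbound : ∀ n, deriv H x ≤ S * deriv H (f^[n] x) := fun n => by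
    have hchain : deriv H (f^[n] x) * deriv f^[n] x = deriv f^[n] (H x) * deriv H x := by
      rw [← deriv_comp x (hHd _) (hf.iterate n x), ← deriv_comp x ((hf.iterate n) _) (hHd x),
        (hcomm.iterate_left n).comp_eq]
    refine le_of_mul_le_mul_right ?_ (hpos n)
    calc deriv H x * deriv f^[n] (H x) = deriv H (f^[n] x) * deriv f^[n] x := by
          rw [hchain, mul_comm]
      _ ≤ deriv H (f^[n] x) * (S * deriv f^[n] (H x)) :=
          mul_le_mul_of_nonneg_left (hdist n) hHmono.deriv_nonneg
      _ = S * deriv H (f^[n] x) * deriv f^[n] (H x) := by ring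
  have hcont := (hH.continuous_deriv le_rfl).tendsto a
  rw [hHa] at hcont
  have hlim : Tendsto (fun n => S * deriv H (f^[n] x)) atTop (𝓝 (S * 1)) :=
    (hcont.comp htend).const_mul S
  simpa using ge_of_tendsto' hlim hbound

theorem Equiv.Perm.apply_eq_of_lipschitzOnWith_inv_pow {G : Equiv.Perm ℝ} {l r : ℝ} {K : ℝ≥0}
    (hG : Monotone G) (hl : G l = l) (hr : G r = r)
    (hK : ∀ m : ℕ, LipschitzOnWith K ⇑(G⁻¹ ^ m) (Icc l r)) {x : ℝ} (hx : x ∈ Icc l r) :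
    G x = x := by
  have hmaps : MapsTo G (Icc l r) (Icc l r) := by
    simpa only [hl, hr] using hG.mapsTo_Icc (a := l) (b := r)
  set u : ℕ → ℝ := fun m => G^[m] x
  have hu : ∀ m, u m ∈ Icc l r := fun m => hmaps.iterate m hx
  obtain ⟨L, hL⟩ : ∃ L, Tendsto u atTop (𝓝 L) := by
    rcases le_total x (G x) with h | h
    · exact ⟨_, tendsto_atTop_ciSup (hG.monotone_iterate_of_le_map h)
        ⟨r, by rintro _ ⟨m, rfl⟩; exact (hu m).2⟩⟩
    · exact ⟨_, tendsto_atTop_ciInf (hG.antitone_iterate_of_map_le h)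
        ⟨l, by rintro _ ⟨m, rfl⟩; exact (hu m).1⟩⟩
  -- `G⁻¹ ^ m` carries the step from `u (m + 1)` to `u m` back to the step from `G x` to `x`.
  have hstep : ∀ m, dist (G x) x ≤ K * dist (u (m + 1)) (u m) := fun m => by
    have hback : ∀ y, (G⁻¹ ^ m) (G^[m] y) = y := fun y => by
      rw [← Equiv.Perm.coe_pow, inv_pow]
      exact (G ^ m).symm_apply_apply y
    simpa only [u, Function.iterate_succ_apply, hback] using
      (hK m).dist_le_mul (u (m + 1)) (hu _) (u m) (hu _)
  have hlim : Tendsto (fun m => (K : ℝ) * dist (u (m + 1)) (u m)) atTop (𝓝 (K * dist L L)) :=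
    ((hL.comp (tendsto_add_atTop_nat 1)).dist hL).const_mul _
  rw [dist_self, mul_zero] at hlim
  exact dist_le_zero.1 (ge_of_tendsto' hlim hstep)

theorem Commute.iterate_apply_eq {α : Type*} {F H : Equiv.Perm α} (hFH : Commute F H) {p : α}
    (hHp : H p = p) (n : ℕ) : H (F^[n] p) = F^[n] p := by
  have hcomm : Function.Commute F H := fun x => DFunLike.congr_fun hFH.eq x
  rw [← (hcomm.iterate_left n).eq, hHp]

theorem lipschitzOnWith_of_commute {F H : Equiv.Perm ℝ} {a b p : ℝ} {S : ℝ≥0}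
    (hF : F ∈ diffeoPlus 2) (hFa : F a = a) (hlt : ∀ x ∈ Ioo a b, F x < x)
    (hS : ∀ x ∈ Icc (F p) p, ∀ y ∈ Icc (F p) p, ∀ n, deriv F^[n] x ≤ S * deriv F^[n] y)
    (hp : p ∈ Ioo a b) (hH : H ∈ diffeoPlus 1) (hFH : Commute F H) (hHp : H p = p) :
    LipschitzOnWith S H (Icc (F p) p) := by
  have hHfix := hFH.iterate_apply_eq hHp
  have htend : ∀ x ∈ Ioo a b, Tendsto (fun n => F^[n] x) atTop (𝓝 a) := fun x hx =>
    tendsto_iterate_of_lt_self hF.1.continuous hF.2.2 hFa hlt hx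
  have hHa : deriv H a = 1 :=
    ((hH.1.differentiable one_ne_zero) a).hasDerivAt.eq_one_of_tendsto_isFixedPt
      (tendsto_nhdsWithin_of_tendsto_nhds_of_eventually_within _ (htend p hp)
        (Eventually.of_forall fun n =>
          ((mapsTo_Ioo_of_lt_self hF.2.2 hFa hlt).iterate n hp).1.ne'))
      hHfix
  have hFp : a < F p := hFa ▸ hF.2.2 hp.1
  have hderiv : ∀ x ∈ Icc (F p) p, deriv H x ≤ S := fun x hx => by
    have hHx : H x ∈ Icc (F p) p := by
      have hHFp : H (F p) = F p := hHfix 1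
      simpa [hHFp, hHp] using hH.2.2.monotone.mapsTo_Icc hx
    refine deriv_le_of_commute_iterate (hF.1.differentiable two_ne_zero) hH.1 hH.2.2.monotone
      (fun x => DFunLike.congr_fun hFH.eq x) (htend x ⟨hFp.trans_le hx.1, hx.2.trans_lt hp.2⟩)
      hHa (hS x hx (H x) hHx) fun n => ?_
    rw [← Equiv.Perm.coe_pow]
    exact deriv_pos_of_mem_diffeoPlus (pow_mem hF n) one_le_two _
  refine (convex_Icc _ _).lipschitzOnWith_of_nnnorm_deriv_le
    (fun x _ => (hH.1.differentiable one_ne_zero) x) fun x hx => ?_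
  rw [← NNReal.coe_le_coe, coe_nnnorm, Real.norm_of_nonneg hH.2.2.monotone.deriv_nonneg]
  exact hderiv x hx

theorem kopell_of_lt {F G : Equiv.Perm ℝ} {a b c : ℝ} (hF : F ∈ diffeoPlus 2)
    (hG : G ∈ diffeoPlus 1) (hFG : Commute F G) (hFa : F a = a) (hlt : ∀ x ∈ Ioo a b, F x < x)
    (hc : c ∈ Ioo a b) (hGc : G c = c) {x : ℝ} (hx : x ∈ Ioo a b) : G x = x := by
  have hmaps := mapsTo_Ioo_of_lt_self hF.2.2 hFa hlt
  have htend : ∀ y ∈ Ioo a b, Tendsto (fun n => F^[n] y) atTop (𝓝 a) := fun y hy =>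
    tendsto_iterate_of_lt_self hF.1.continuous hF.2.2 hFa hlt hy
  obtain ⟨S, hS⟩ := exists_deriv_iterate_le_mul (b := b) hF.1 hF.2.2.monotone hFa
    fun y _ => deriv_pos_of_mem_diffeoPlus hF one_le_two y
  -- Since `G` commutes with `F`, it suffices to show that `G` fixes `F^[n] x`, which lies in a
  -- fundamental domain `[F p, p]` below `c`.
  obtain ⟨n, hn⟩ : ∃ n, F^[n] x < c := ((htend x hx).eventually (eventually_lt_nhds hc.1)).exists
  obtain ⟨k, hk, hk'⟩ := exists_succ_lt_le (u := fun k => F^[k] c) hn.le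
    ((htend c hc).eventually (eventually_lt_nhds (hmaps.iterate n hx).1)).exists
  set p := F^[k] c
  have hp : p ∈ Ioo a b := hmaps.iterate k hc
  have hGp : G p = p := hFG.iterate_apply_eq hGc k
  have hGy : G (F^[n] x) = F^[n] x := by
    refine Equiv.Perm.apply_eq_of_lipschitzOnWith_inv_pow (K := S) hG.2.2.monotone
      (hFG.iterate_apply_eq hGp 1 : G (F p) = F p) hGp (fun m => ?_)
      ⟨by simpa [p, Function.iterate_succ_apply'] using hk.le, hk'⟩
    exact lipschitzOnWith_of_commute hF hFa hlt (hS p ⟨hp.1.le, hp.2.le⟩) hp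
      (pow_mem (inv_mem hG) m) (hFG.inv_right.pow_right m)
      (Equiv.Perm.pow_apply_eq_self_of_apply_eq_self (Equiv.Perm.inv_eq_iff_eq.2 hGp.symm) m)
  have hcomm : Function.Commute F G := fun y => DFunLike.congr_fun hFG.eq y
  exact (hF.2.2.iterate n).injective (by rw [(hcomm.iterate_left n).eq, hGy])

theorem kopell {F G : Equiv.Perm ℝ} {a b c : ℝ} (hF : F ∈ diffeoPlus 2) (hG : G ∈ diffeoPlus 1)
    (hFG : Commute F G) (hFa : F a = a) (hne : ∀ x ∈ Ioo a b, F x ≠ x) (hc : c ∈ Ioo a b)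
    (hGc : G c = c) {x : ℝ} (hx : x ∈ Ioo a b) : G x = x := by
  rcases forall_lt_or_forall_gt_of_ne hF.1.continuous.continuousOn hne with hlt | hgt
  · exact kopell_of_lt hF hG hFG hFa hlt hc hGc hx
  · refine kopell_of_lt (inv_mem hF) hG hFG.inv_left (Equiv.Perm.inv_eq_iff_eq.2 hFa.symm)
      (fun y hy => ?_) hc hGc hx
    simpa using (Equiv.strictMono_symm hF.2.2) (hgt y hy)

theorem exists_mem_Ioo_apply_eq_of_mul_mul_eq {f g : Equiv.Perm ℝ} {a b : ℝ} (hab : a < b)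
    (hf : Continuous f) (hfm : StrictMono f) (hfa : f a = a) (hfb : f b = b)
    (hgm : StrictMono g) (hga : g a = a) (hgb : g b = b) (hfg : f * g * f = g) :
    ∃ c ∈ Ioo a b, f c = c := by
  by_contra! hne
  obtain ⟨x, hx⟩ := nonempty_Ioo.2 hab
  have hfx : f x ∈ Ioo a b := by simpa only [hfa, hfb] using hfm.mapsTo_Ioo hx
  have hgfx : g (f x) ∈ Ioo a b := by simpa only [hga, hgb] using hgm.mapsTo_Ioo hfx
  have hrel : f (g (f x)) = g x := DFunLike.congr_fun hfg x
  rcases forall_lt_or_forall_gt_of_ne hf.continuousOn hne with hlt | hgt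
  · have := hlt _ hgfx
    rw [hrel, hgm.lt_iff_lt] at this
    exact (hlt x hx).not_gt this
  · have := hgt _ hgfx
    rw [hrel, hgm.lt_iff_lt] at this
    exact (hgt x hx).not_gt this

/-- Lemma 5.2: for g ∈ Diff_c²(ℝ), the centralizer of g in Diff_c²(ℝ) equals the
centralizer of g². -/
theorem centralizer_sq_eq_centralizer_diffc (g : Equiv.Perm ℝ) (hg : IsRDiffc g) :
    ∀ h : Equiv.Perm ℝ, IsRDiffc h → (Commute g h ↔ Commute (g * g) h) := by
  intro h hh
  refine ⟨fun hcomm => hcomm.mul_left hcomm, fun hcomm => ?_⟩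
  obtain ⟨hg2, hg2', hgm, K, hK, hKfix⟩ := hg
  have hgD : g ∈ diffeoPlus 2 := ⟨hg2, hg2', hgm⟩
  have hhD : h ∈ diffeoPlus 2 := ⟨hh.1, hh.2.1, hh.2.2.1⟩
  set f := ⁅g⁻¹, h⁻¹⁆
  have hfD : f ∈ diffeoPlus 2 := by
    simp only [f, commutatorElement_def, inv_inv]
    exact mul_mem (mul_mem (mul_mem (inv_mem hgD) (inv_mem hhD)) hgD) hhD
  have hfg : f * g * f = g := mul_mul_eq_of_commute_mul_self hcomm
  have hfix : ∀ x, g x = x → f x = x := fun x =>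
    commutatorElement_inv_inv_apply_eq_self hgm.monotone hcomm
  rw [← Commute.inv_inv_iff, ← commutatorElement_eq_one_iff_commute]
  refine Equiv.ext fun x => by_contra fun hx => ?_
  obtain ⟨a, ha : g a = a, b, hb : g b = b, hxab, hab⟩ :=
    (isClosed_eq hg2.continuous continuous_id').exists_Ioo_subset_compl
      (hK.isBounded.subset fun y hy => by_contra fun hyK => hy (hKfix y hyK))
      (fun hgx => hx (hfix x hgx))
  obtain ⟨c, hc, hfc⟩ := exists_mem_Ioo_apply_eq_of_mul_mul_eq (hxab.1.trans hxab.2)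
    hfD.1.continuous hfD.2.2 (hfix a ha) (hfix b hb) hgm ha hb hfg
  refine hx (kopell (mul_mem hgD hgD) (diffeoPlus_antitone one_le_two hfD)
    (commute_mul_self_of_mul_mul_eq hfg) (by simp [ha]) (fun y hy hgy => hab hy ?_) hc hfc hxab)
  exact hgm.monotone.apply_eq_of_apply_apply_eq hgy
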